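/- Let |c₀⟩, |c₁⟩ be unit vectors in ℂ² with 0 < |⟨c₀|c₁⟩| < 1, and suppose a unitary U on ℂ²⊗ℂ² satisfies U|c₀c₀⟩ = e^{iφ₀₀}|c₁c₁⟩, U|c₁c₁⟩ = e^{iφ₁₁}|c₀c₀⟩, U|c₀c₁⟩ = e^{iφ₀₁}|c₀c₁⟩, U|c₁c₀⟩ = e^{iφ₁₀}|c₁c₀⟩. Then, after multiplying U by the global phase e^{-iφ₀₀}, the phases satisfy e^{iφ₀₁} = e^{iφ₁₀} = e^{iφ₁₁/2} = ⟨c₀|c₁⟩/⟨c₁|c₀⟩. -/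

import Mathlib

/-!
A unitary preserves the inner products of the four product states. Pairing
`|c₀c₀⟩` with `|c₀c₁⟩`, `|c₁c₀⟩` and `|c₁c₁⟩`, whose images are phase multiples of
`|c₁c₁⟩`, `|c₀c₁⟩`, `|c₁c₀⟩` and `|c₀c₀⟩`, gives
`e^{i(φ₀₁-φ₀₀)} ⟨c₁|c₀⟩ = ⟨c₀|c₁⟩`, `e^{i(φ₁₀-φ₀₀)} ⟨c₁|c₀⟩ = ⟨c₀|c₁⟩` and
`e^{i(φ₁₁-φ₀₀)} ⟨c₁|c₀⟩² = ⟨c₀|c₁⟩²`; dividing by `⟨c₁|c₀⟩ ≠ 0` gives the phases.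
-/

open Matrix

/-- The inner product ⟨x|y⟩ on ℂ². -/
noncomputable def inp (x y : Fin 2 → ℂ) : ℂ := star x ⬝ᵥ y

/-- The tensor product a ⊗ b of two vectors of ℂ², as a vector of ℂ²⊗ℂ². -/
def tv (a b : Fin 2 → ℂ) : Fin 2 × Fin 2 → ℂ := fun p => a p.1 * b p.2

lemma conj_exp_mul_I_mul_exp_mul_I (α β : ℝ) :
    starRingEnd ℂ (Complex.exp (Complex.I * α)) * Complex.exp (Complex.I * β) =
      Complex.exp (Complex.I * (β - α)) := by
  rw [← Complex.exp_conj, ← Complex.exp_add, map_mul, Complex.conj_I, Complex.conj_ofReal]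
  ring_nf

section Unitary

variable {n : Type*} [Fintype n] [DecidableEq n]

lemma star_mulVec_dotProduct_mulVec_of_mem_unitaryGroup {U : Matrix n n ℂ}
    (hU : U ∈ unitaryGroup n ℂ) (x y : n → ℂ) :
    star (U *ᵥ x) ⬝ᵥ (U *ᵥ y) = star x ⬝ᵥ y := by
  rw [star_mulVec, dotProduct_mulVec, vecMul_vecMul, ← star_eq_conjTranspose,
    mem_unitaryGroup_iff'.mp hU, vecMul_one]

lemma exp_mul_dotProduct_eq_of_mem_unitaryGroup {U : Matrix n n ℂ}
    (hU : U ∈ unitaryGroup n ℂ) {x y x' y' : n → ℂ} {α β : ℝ}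
    (hx : U *ᵥ x = Complex.exp (Complex.I * α) • x')
    (hy : U *ᵥ y = Complex.exp (Complex.I * β) • y') :
    Complex.exp (Complex.I * (β - α)) * (star x' ⬝ᵥ y') = star x ⬝ᵥ y := by
  rw [← star_mulVec_dotProduct_mulVec_of_mem_unitaryGroup hU x y, hx, hy, star_smul,
    smul_dotProduct, dotProduct_smul, smul_smul, smul_eq_mul, Complex.star_def,
    conj_exp_mul_I_mul_exp_mul_I]

end Unitary

lemma inp_swap (x y : Fin 2 → ℂ) : inp y x = starRingEnd ℂ (inp x y) := by
  rw [inp, star_dotProduct, Complex.star_def]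
  rfl

lemma star_tv_dotProduct_tv (a b c d : Fin 2 → ℂ) :
    star (tv a b) ⬝ᵥ tv c d = inp a c * inp b d := by
  simp only [inp, tv, dotProduct, Fintype.sum_prod_type, Pi.star_apply, star_mul',
    Finset.sum_mul_sum]
  exact Finset.sum_congr rfl fun i _ => Finset.sum_congr rfl fun j _ => by ring

theorem stmt_5_general (c₀ c₁ : Fin 2 → ℂ) (h₀ : inp c₀ c₀ = 1) (h₁ : inp c₁ c₁ = 1)
    (hlow : 0 < ‖inp c₀ c₁‖)
    (U : Matrix (Fin 2 × Fin 2) (Fin 2 × Fin 2) ℂ)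
    (hU : U ∈ Matrix.unitaryGroup (Fin 2 × Fin 2) ℂ)
    (φ₀₀ φ₁₁ φ₀₁ φ₁₀ : ℝ)
    (h00 : U.mulVec (tv c₀ c₀) = Complex.exp (Complex.I * φ₀₀) • tv c₁ c₁)
    (h11 : U.mulVec (tv c₁ c₁) = Complex.exp (Complex.I * φ₁₁) • tv c₀ c₀)
    (h01 : U.mulVec (tv c₀ c₁) = Complex.exp (Complex.I * φ₀₁) • tv c₀ c₁)
    (h10 : U.mulVec (tv c₁ c₀) = Complex.exp (Complex.I * φ₁₀) • tv c₁ c₀) :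
    Complex.exp (Complex.I * (φ₀₁ - φ₀₀)) = inp c₀ c₁ / inp c₁ c₀ ∧
    Complex.exp (Complex.I * (φ₁₀ - φ₀₀)) = inp c₀ c₁ / inp c₁ c₀ ∧
    Complex.exp (Complex.I * (φ₁₁ - φ₀₀)) = (inp c₀ c₁ / inp c₁ c₀) ^ 2 := by
  have hne : inp c₁ c₀ ≠ 0 := by
    rw [inp_swap, map_ne_zero]
    exact norm_pos_iff.mp hlow
  have e01 := exp_mul_dotProduct_eq_of_mem_unitaryGroup hU h00 h01
  have e10 := exp_mul_dotProduct_eq_of_mem_unitaryGroup hU h00 h10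
  have e11 := exp_mul_dotProduct_eq_of_mem_unitaryGroup hU h00 h11
  simp only [star_tv_dotProduct_tv, h₀, h₁, mul_one, one_mul] at e01 e10 e11
  refine ⟨eq_div_of_mul_eq hne e01, eq_div_of_mul_eq hne e10, ?_⟩
  rw [div_pow]
  exact eq_div_of_mul_eq (pow_ne_zero 2 hne) (by rw [sq, sq, e11])

/-- For a superposition-free unitary of "Class 3" (swapping |c₀c₀⟩ ↔ |c₁c₁⟩ and fixing
|c₀c₁⟩, |c₁c₀⟩ up to phases), after removing the global phase e^{iφ₀₀} the remaining
phases are fixed: e^{i(φ₀₁-φ₀₀)} = e^{i(φ₁₀-φ₀₀)} = ⟨c₀|c₁⟩/⟨c₁|c₀⟩ and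
e^{i(φ₁₁-φ₀₀)} = (⟨c₀|c₁⟩/⟨c₁|c₀⟩)². -/
theorem stmt_5 (c₀ c₁ : Fin 2 → ℂ) (h₀ : inp c₀ c₀ = 1) (h₁ : inp c₁ c₁ = 1)
    (hlow : 0 < ‖inp c₀ c₁‖) (hup : ‖inp c₀ c₁‖ < 1)
    (U : Matrix (Fin 2 × Fin 2) (Fin 2 × Fin 2) ℂ)
    (hU : U ∈ Matrix.unitaryGroup (Fin 2 × Fin 2) ℂ)
    (φ₀₀ φ₁₁ φ₀₁ φ₁₀ : ℝ)
    (h00 : U.mulVec (tv c₀ c₀) = Complex.exp (Complex.I * φ₀₀) • tv c₁ c₁)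
    (h11 : U.mulVec (tv c₁ c₁) = Complex.exp (Complex.I * φ₁₁) • tv c₀ c₀)
    (h01 : U.mulVec (tv c₀ c₁) = Complex.exp (Complex.I * φ₀₁) • tv c₀ c₁)
    (h10 : U.mulVec (tv c₁ c₀) = Complex.exp (Complex.I * φ₁₀) • tv c₁ c₀) :
    Complex.exp (Complex.I * (φ₀₁ - φ₀₀)) = inp c₀ c₁ / inp c₁ c₀ ∧
    Complex.exp (Complex.I * (φ₁₀ - φ₀₀)) = inp c₀ c₁ / inp c₁ c₀ ∧
    Complex.exp (Complex.I * (φ₁₁ - φ₀₀)) = (inp c₀ c₁ / inp c₁ c₀) ^ 2 :=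
  stmt_5_general c₀ c₁ h₀ h₁ hlow U hU φ₀₀ φ₁₁ φ₀₁ φ₁₀ h00 h11 h01 h10
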